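/- arXiv:2511.16367 — 2 statements merged into one kernel-verified Lean document; each statement's English description precedes it below -/
import Mathlib

section
/- In the symmetric two-player game on ℕ × ℕ where player 1 receives payoff 1/m when playing m against an opponent action n < m and 0 otherwise (u₁(m,n) = 1/m if n < m, else 0), with both players using charges on ℕ: a pair of strategies (κ₁,κ₂) is a Nash equilibrium if and only if both κ₁ and κ₂ are diffuse charges, and every Nash equilibrium yields payoff 0 to both players. In particular, this game has no Nash equilibrium in countably additive strategies. -/
/-!
Against a charge `κ` the pure strategy `m` earns `κ {n | n < m} / m`. If the opponent is
diffuse, every strategy earns `0`, so diffuse pairs are equilibria with payoff `0`.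
Conversely, in an equilibrium each player's value bounds every pure payoff and is attained at
each of that player's atoms. An atom of either player makes both values positive, since a
positive value can only be approached by the finitely many pure strategies `m` with `1 / m`
above it. An atom at `m` of one player then forces the opponent to have an atom below `m`,
which is impossible for the least atom of the two charges. Countable additivity rules out
diffuse charges, since they would give `κ univ = 0`.
-/

/-- A charge: a finitely additive probability measure on the powerset of `α`. -/
structure IsCharge {α : Type*} (κ : Set α → ℝ) : Prop where
  nonneg : ∀ E, 0 ≤ κ E
  empty : κ ∅ = 0
  total : κ Set.univ = 1
  additive : ∀ E G, Disjoint E G → κ (E ∪ G) = κ E + κ G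

/-- A charge is diffuse if every singleton has measure zero. -/
def Diffuse {α : Type*} (κ : Set α → ℝ) : Prop := ∀ a : α, κ {a} = 0

/-- A charge on `ℕ` (here `ℕ = {1,2,…}`, i.e. `ℕ+`) is countably additive if it is determined
by its values on singletons. -/
def CountablyAdditive (κ : Set ℕ+ → ℝ) : Prop :=
  ∀ E : Set ℕ+, κ E = ∑' k : E, κ {(k : ℕ+)}

/-- The integral of a bounded function against a charge, via lower simple sums. -/
noncomputable def chargeIntegral {α : Type*} (κ : Set α → ℝ) (u : α → ℝ) : ℝ :=
  sSup {r | ∃ g : α → ℝ, ∃ hg : (Set.range g).Finite,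
    (∀ a, g a ≤ u a) ∧ r = ∑ c ∈ hg.toFinset, c * κ (g ⁻¹' {c})}

/-- The payoff of a player choosing `m` against an opponent choosing `n`:
`1/m` if `n < m`, and `0` otherwise. -/
noncomputable def waldu (m n : ℕ+) : ℝ := if n < m then 1 / ((m : ℕ) : ℝ) else 0

/-- Expected payoff of player 1 (own strategy `κ₁`, opponent `κ₂`). -/
noncomputable def U1 (κ₁ κ₂ : Set ℕ+ → ℝ) : ℝ :=
  chargeIntegral κ₁ (fun m => chargeIntegral κ₂ (fun n => waldu m n))

/-- Expected payoff of player 2 (opponent `κ₁`, own strategy `κ₂`). -/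
noncomputable def U2 (κ₁ κ₂ : Set ℕ+ → ℝ) : ℝ :=
  chargeIntegral κ₂ (fun n => chargeIntegral κ₁ (fun m => waldu n m))

/-- Nash equilibrium: mutual best responses over all charges. -/
def NashEq (κ₁ κ₂ : Set ℕ+ → ℝ) : Prop :=
  (∀ τ₁ : Set ℕ+ → ℝ, IsCharge τ₁ → U1 τ₁ κ₂ ≤ U1 κ₁ κ₂) ∧
  (∀ τ₂ : Set ℕ+ → ℝ, IsCharge τ₂ → U2 κ₁ τ₂ ≤ U2 κ₁ κ₂)

open Set

namespace IsCharge

variable {α : Type*} {κ : Set α → ℝ}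

theorem mono (hκ : IsCharge κ) {A B : Set α} (h : A ⊆ B) : κ A ≤ κ B := by
  have := hκ.additive A (B \ A) disjoint_sdiff_right
  rw [union_sdiff_cancel h] at this
  linarith [hκ.nonneg (B \ A)]

theorem le_one (hκ : IsCharge κ) (A : Set α) : κ A ≤ 1 :=
  hκ.total ▸ hκ.mono (subset_univ A)

theorem compl_eq (hκ : IsCharge κ) (A : Set α) : κ Aᶜ = 1 - κ A := by
  have := hκ.additive A Aᶜ disjoint_compl_right
  rw [union_compl_self, hκ.total] at this
  linarith

theorem biUnion_finset {ι : Type*} (hκ : IsCharge κ) (s : Finset ι) {f : ι → Set α}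
    (hf : (s : Set ι).PairwiseDisjoint f) : κ (⋃ i ∈ s, f i) = ∑ i ∈ s, κ (f i) := by
  classical
  induction s using Finset.induction_on with
  | empty => simp [hκ.empty]
  | insert i s hi ih =>
    rw [Finset.coe_insert] at hf
    have hdisj : Disjoint (f i) (⋃ j ∈ s, f j) :=
      disjoint_iUnion₂_right.mpr fun j hj =>
        hf (mem_insert i _) (mem_insert_of_mem i hj) (ne_of_mem_of_not_mem hj hi).symm
    rw [Finset.set_biUnion_insert, hκ.additive _ _ hdisj, Finset.sum_insert hi,
      ih (hf.subset (subset_insert i _))]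

theorem finite_eq_sum (hκ : IsCharge κ) {S : Set α} (hS : S.Finite) :
    κ S = ∑ a ∈ hS.toFinset, κ {a} := by
  conv_lhs => rw [← biUnion_of_singleton S, ← hS.coe_toFinset, Finset.set_biUnion_coe]
  exact hκ.biUnion_finset _ (pairwiseDisjoint_singleton' _)

theorem eq_zero_of_finite (hκ : IsCharge κ) (hd : Diffuse κ) {S : Set α} (hS : S.Finite) :
    κ S = 0 := by
  simp [hκ.finite_eq_sum hS, hd _]

theorem exists_atom_of_finite (hκ : IsCharge κ) {S : Set α} (hS : S.Finite) (h : 0 < κ S) :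
    ∃ a ∈ S, 0 < κ {a} := by
  by_contra! hc
  have : κ S = 0 := by
    rw [hκ.finite_eq_sum hS]
    exact Finset.sum_eq_zero fun a ha =>
      (hc a (hS.mem_toFinset.mp ha)).antisymm (hκ.nonneg _)
  linarith

theorem mul_le_mul_of_nonempty (hκ : IsCharge κ) {P : Set α} {b c : ℝ}
    (h : P.Nonempty → c ≤ b) : c * κ P ≤ b * κ P := by
  rcases P.eq_empty_or_nonempty with rfl | hP
  · simp [hκ.empty]
  · exact mul_le_mul_of_nonneg_right (h hP) (hκ.nonneg P)

end IsCharge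

open scoped Classical in
noncomputable def diracCharge {α : Type*} (a : α) (E : Set α) : ℝ := if a ∈ E then 1 else 0

theorem isCharge_diracCharge {α : Type*} (a : α) : IsCharge (diracCharge a) where
  nonneg E := by unfold diracCharge; split <;> norm_num
  empty := by simp [diracCharge]
  total := by simp [diracCharge]
  additive E G h := by
    by_cases hE : a ∈ E
    · simp [diracCharge, hE, disjoint_left.mp h hE]
    · by_cases hG : a ∈ G <;> simp [diracCharge, hE, hG]

section ChargeIntegral

variable {α : Type*} {κ : Set α → ℝ}

def lowerSums (κ : Set α → ℝ) (u : α → ℝ) : Set ℝ :=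
  {r | ∃ g : α → ℝ, ∃ hg : (Set.range g).Finite,
    (∀ a, g a ≤ u a) ∧ r = ∑ c ∈ hg.toFinset, c * κ (g ⁻¹' {c})}

theorem simpleSum_eq_of_range_subset (hκ : IsCharge κ) {g : α → ℝ} (hg : (range g).Finite)
    {s : Finset ℝ} (hs : range g ⊆ s) :
    ∑ c ∈ hg.toFinset, c * κ (g ⁻¹' {c}) = ∑ c ∈ s, c * κ (g ⁻¹' {c}) := by
  refine Finset.sum_subset (fun c hc => hs (hg.mem_toFinset.mp hc)) fun c _ hc => ?_
  have : g ⁻¹' {c} = ∅ :=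
    eq_empty_of_forall_notMem fun x hx => hc (hg.mem_toFinset.mpr ⟨x, hx⟩)
  simp [this, hκ.empty]

theorem zero_mem_lowerSums {u : α → ℝ} (h0 : ∀ x, 0 ≤ u x) : (0 : ℝ) ∈ lowerSums κ u :=
  ⟨fun _ => 0, finite_range_const, h0, (Finset.sum_eq_zero fun c hc => by
    obtain ⟨_, rfl⟩ := finite_range_const.mem_toFinset.mp hc; exact zero_mul _).symm⟩

theorem le_of_mem_lowerSums (hκ : IsCharge κ) {u : α → ℝ} {A : Set α} {bi bo r : ℝ}
    (hbi : ∀ x, u x ≤ bi) (hbo : ∀ x ∉ A, u x ≤ bo) (hr : r ∈ lowerSums κ u) :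
    r ≤ bi * κ A + bo * κ Aᶜ := by
  obtain ⟨g, hg, hgu, rfl⟩ := hr
  have hsplit (B : Set α) : ∑ c ∈ hg.toFinset, κ (g ⁻¹' {c} ∩ B) = κ B := by
    rw [← hκ.biUnion_finset, ← Finset.set_biUnion_coe, ← iUnion₂_inter, hg.coe_toFinset,
      biUnion_preimage_singleton, preimage_range, univ_inter]
    exact fun c _ c' _ hcc' => (disjoint_singleton.mpr hcc').preimage g |>.mono
      inter_subset_left inter_subset_left
  have hlevel (c : ℝ) : c * κ (g ⁻¹' {c}) ≤
      bi * κ (g ⁻¹' {c} ∩ A) + bo * κ (g ⁻¹' {c} ∩ Aᶜ) := by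
    have hsub : κ (g ⁻¹' {c}) = κ (g ⁻¹' {c} ∩ A) + κ (g ⁻¹' {c} ∩ Aᶜ) := by
      rw [← hκ.additive _ _ (disjoint_compl_right.mono inter_subset_right inter_subset_right),
        ← inter_union_distrib_left, union_compl_self, inter_univ]
    rw [hsub, mul_add]
    exact add_le_add
      (hκ.mul_le_mul_of_nonempty fun ⟨x, hx, _⟩ => hx ▸ (hgu x).trans (hbi x))
      (hκ.mul_le_mul_of_nonempty fun ⟨x, hx, hxA⟩ => hx ▸ (hgu x).trans (hbo x hxA))
  calc ∑ c ∈ hg.toFinset, c * κ (g ⁻¹' {c})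
      ≤ ∑ c ∈ hg.toFinset, (bi * κ (g ⁻¹' {c} ∩ A) + bo * κ (g ⁻¹' {c} ∩ Aᶜ)) :=
        Finset.sum_le_sum fun c _ => hlevel c
    _ = bi * κ A + bo * κ Aᶜ := by
        rw [Finset.sum_add_distrib, ← Finset.mul_sum, ← Finset.mul_sum, hsplit, hsplit]

theorem bddAbove_lowerSums (hκ : IsCharge κ) {u : α → ℝ} {B : ℝ} (hB : ∀ x, u x ≤ B) :
    BddAbove (lowerSums κ u) :=
  ⟨B * κ univ + B * κ univᶜ, fun _ => le_of_mem_lowerSums hκ hB fun _ hx => (hx trivial).elim⟩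

theorem le_chargeIntegral (hκ : IsCharge κ) {u : α → ℝ} {B r : ℝ} (hB : ∀ x, u x ≤ B)
    (hr : r ∈ lowerSums κ u) : r ≤ chargeIntegral κ u :=
  le_csSup (bddAbove_lowerSums hκ hB) hr

theorem chargeIntegral_nonneg (hκ : IsCharge κ) {u : α → ℝ} {B : ℝ} (h0 : ∀ x, 0 ≤ u x)
    (hB : ∀ x, u x ≤ B) : 0 ≤ chargeIntegral κ u :=
  le_chargeIntegral hκ hB (zero_mem_lowerSums h0)

theorem chargeIntegral_le (hκ : IsCharge κ) {u : α → ℝ} {A : Set α} {bi bo : ℝ}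
    (h0 : ∀ x, 0 ≤ u x) (hbi : ∀ x, u x ≤ bi) (hbo : ∀ x ∉ A, u x ≤ bo) :
    chargeIntegral κ u ≤ bi * κ A + bo * κ Aᶜ :=
  csSup_le ⟨0, zero_mem_lowerSums h0⟩ fun _ => le_of_mem_lowerSums hκ hbi hbo

theorem mul_le_chargeIntegral (hκ : IsCharge κ) {u : α → ℝ} {A : Set α} {b B : ℝ}
    (h0 : ∀ x, 0 ≤ u x) (hB : ∀ x, u x ≤ B) (hA : ∀ x ∈ A, b ≤ u x) :
    b * κ A ≤ chargeIntegral κ u := by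
  classical
  rcases le_or_gt b 0 with hb | hb
  · exact (mul_nonpos_of_nonpos_of_nonneg hb (hκ.nonneg A)).trans
      (chargeIntegral_nonneg hκ h0 hB)
  refine le_chargeIntegral hκ hB ?_
  have hsub : range (A.indicator fun _ => b) ⊆ ({0, b} : Finset ℝ) := by
    rintro _ ⟨x, rfl⟩
    by_cases hx : x ∈ A <;> simp [hx]
  have hfin : (range (A.indicator fun _ => b)).Finite := (toFinite _).subset hsub
  refine ⟨_, hfin, fun x => ?_, ?_⟩
  · by_cases hx : x ∈ A
    · simpa [hx] using hA x hx
    · simpa [hx] using h0 x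
  · have hlevel : (A.indicator fun _ => b) ⁻¹' {b} = A := by
      ext x
      by_cases hx : x ∈ A <;> simp [hx, hb.ne]
    rw [simpleSum_eq_of_range_subset hκ hfin hsub, Finset.sum_pair hb.ne, hlevel]
    simp

theorem chargeIntegral_zero (hκ : IsCharge κ) : chargeIntegral κ (fun _ : α => (0 : ℝ)) = 0 := by
  refine le_antisymm ?_ (chargeIntegral_nonneg hκ (B := 0) (fun _ => le_rfl) fun _ => le_rfl)
  simpa using chargeIntegral_le hκ (A := univ) (bi := 0) (bo := 0) (fun _ => le_rfl)
    (fun _ => le_rfl) fun _ _ => le_rfl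

theorem chargeIntegral_diracCharge (a : α) {u : α → ℝ} {B : ℝ} (h0 : ∀ x, 0 ≤ u x)
    (hB : ∀ x, u x ≤ B) : chargeIntegral (diracCharge a) u = u a := by
  apply le_antisymm
  · simpa [diracCharge] using chargeIntegral_le (isCharge_diracCharge a) (A := {a}ᶜ) h0 hB
      (bo := u a) fun x hx => (congrArg u (not_not.mp hx : x = a)).le
  · simpa [diracCharge] using mul_le_chargeIntegral (isCharge_diracCharge a) (A := {a}) h0 hB
      fun x hx => (congrArg u (hx : x = a)).ge

theorem le_of_atom (hκ : IsCharge κ) {u : α → ℝ} {t : ℝ} (h0 : ∀ x, 0 ≤ u x)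
    (hut : ∀ x, u x ≤ t) (ht : t ≤ chargeIntegral κ u) {a : α} (ha : 0 < κ {a}) :
    t ≤ u a := by
  have := chargeIntegral_le hκ (A := {a}ᶜ) (bo := u a) h0 hut fun x hx =>
    (congrArg u (not_not.mp hx : x = a)).le
  rw [compl_compl, hκ.compl_eq {a}] at this
  nlinarith

theorem superlevel_pos_of_lt_chargeIntegral (hκ : IsCharge κ) {u : α → ℝ} {s B : ℝ}
    (h0 : ∀ x, 0 ≤ u x) (hB : ∀ x, u x ≤ B) (hs : s < chargeIntegral κ u) :
    0 < κ {x | s < u x} := by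
  by_contra! hle
  have hzero : κ {x | s < u x} = 0 := hle.antisymm (hκ.nonneg _)
  have := chargeIntegral_le hκ (A := {x | s < u x}) h0 hB fun x hx => not_lt.mp hx
  rw [hκ.compl_eq, hzero] at this
  linarith

end ChargeIntegral

noncomputable def payoffAgainst (κ : Set ℕ+ → ℝ) (m : ℕ+) : ℝ := 1 / (m : ℝ) * κ (Iio m)

theorem payoffAgainst_nonneg {κ : Set ℕ+ → ℝ} (hκ : IsCharge κ) (m : ℕ+) :
    0 ≤ payoffAgainst κ m :=
  mul_nonneg (by positivity) (hκ.nonneg _)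

theorem payoffAgainst_le_inv {κ : Set ℕ+ → ℝ} (hκ : IsCharge κ) (m : ℕ+) :
    payoffAgainst κ m ≤ 1 / (m : ℝ) :=
  mul_le_of_le_one_right (by positivity) (hκ.le_one _)

theorem payoffAgainst_le_one {κ : Set ℕ+ → ℝ} (hκ : IsCharge κ) (m : ℕ+) :
    payoffAgainst κ m ≤ 1 :=
  (payoffAgainst_le_inv hκ m).trans <| div_le_one_of_le₀ (by exact_mod_cast m.2) (by positivity)

theorem payoffAgainst_eq_zero {κ : Set ℕ+ → ℝ} (hκ : IsCharge κ) (hd : Diffuse κ) :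
    payoffAgainst κ = 0 := by
  funext m
  simp [payoffAgainst, hκ.eq_zero_of_finite hd (finite_Iio m)]

theorem chargeIntegral_waldu {κ : Set ℕ+ → ℝ} (hκ : IsCharge κ) (m : ℕ+) :
    chargeIntegral κ (waldu m) = payoffAgainst κ m := by
  have h0 (n : ℕ+) : 0 ≤ waldu m n := by unfold waldu; split <;> positivity
  have hle (n : ℕ+) : waldu m n ≤ 1 / (m : ℝ) := by
    unfold waldu; split
    · exact le_rfl
    · positivity
  apply le_antisymm
  · simpa [payoffAgainst] using chargeIntegral_le hκ (A := Iio m) (bo := 0) h0 hle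
      fun n hn => (if_neg hn).le
  · exact mul_le_chargeIntegral hκ h0 hle fun n hn => (if_pos hn).ge

theorem U1_eq {κ₂ : Set ℕ+ → ℝ} (hκ₂ : IsCharge κ₂) (κ₁ : Set ℕ+ → ℝ) :
    U1 κ₁ κ₂ = chargeIntegral κ₁ (payoffAgainst κ₂) := by
  simp only [U1, chargeIntegral_waldu hκ₂]

theorem U2_eq {κ₁ : Set ℕ+ → ℝ} (hκ₁ : IsCharge κ₁) (κ₂ : Set ℕ+ → ℝ) :
    U2 κ₁ κ₂ = chargeIntegral κ₂ (payoffAgainst κ₁) := by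
  simp only [U2, chargeIntegral_waldu hκ₁]

theorem U1_eq_zero {κ₁ κ₂ : Set ℕ+ → ℝ} (hκ₁ : IsCharge κ₁) (hκ₂ : IsCharge κ₂)
    (hd : Diffuse κ₂) : U1 κ₁ κ₂ = 0 := by
  rw [U1_eq hκ₂, payoffAgainst_eq_zero hκ₂ hd]
  exact chargeIntegral_zero hκ₁

theorem U2_eq_zero {κ₁ κ₂ : Set ℕ+ → ℝ} (hκ₁ : IsCharge κ₁) (hκ₂ : IsCharge κ₂)
    (hd : Diffuse κ₁) : U2 κ₁ κ₂ = 0 := by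
  rw [U2_eq hκ₁, payoffAgainst_eq_zero hκ₁ hd]
  exact chargeIntegral_zero hκ₂

def IsBestResponse (a b : Set ℕ+ → ℝ) : Prop :=
  ∀ m : ℕ+, payoffAgainst b m ≤ chargeIntegral a (payoffAgainst b)

theorem NashEq.isBestResponse_left {κ₁ κ₂ : Set ℕ+ → ℝ} (hκ₂ : IsCharge κ₂)
    (hN : NashEq κ₁ κ₂) : IsBestResponse κ₁ κ₂ := fun m => by
  have := hN.1 (diracCharge m) (isCharge_diracCharge m)
  rwa [U1_eq hκ₂, U1_eq hκ₂, chargeIntegral_diracCharge m (payoffAgainst_nonneg hκ₂)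
    (payoffAgainst_le_one hκ₂)] at this

theorem NashEq.isBestResponse_right {κ₁ κ₂ : Set ℕ+ → ℝ} (hκ₁ : IsCharge κ₁)
    (hN : NashEq κ₁ κ₂) : IsBestResponse κ₂ κ₁ := fun m => by
  have := hN.2 (diracCharge m) (isCharge_diracCharge m)
  rwa [U2_eq hκ₁, U2_eq hκ₁, chargeIntegral_diracCharge m (payoffAgainst_nonneg hκ₁)
    (payoffAgainst_le_one hκ₁)] at this

theorem exists_atom_of_integral_payoffAgainst_pos {a b : Set ℕ+ → ℝ} (ha : IsCharge a)
    (hb : IsCharge b)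
    (hv : 0 < chargeIntegral a (payoffAgainst b)) : ∃ m, 0 < a {m} := by
  set v := chargeIntegral a (payoffAgainst b)
  have hfin : {m | v / 2 < payoffAgainst b m}.Finite := by
    refine ((finite_Iic ⌈2 / v⌉₊).preimage PNat.coe_injective.injOn).subset fun m hm => ?_
    have hm' : v / 2 < 1 / (m : ℝ) := lt_of_lt_of_le hm (payoffAgainst_le_inv hb m)
    have hmv : (m : ℝ) < 2 / v := by
      rw [lt_div_iff₀ hv]
      rw [lt_div_iff₀ (by positivity)] at hm'
      linarith
    exact_mod_cast hmv.le.trans (Nat.le_ceil _)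
  obtain ⟨m, -, hm⟩ := ha.exists_atom_of_finite hfin <|
    superlevel_pos_of_lt_chargeIntegral ha (payoffAgainst_nonneg hb) (payoffAgainst_le_one hb)
      (half_lt_self hv)
  exact ⟨m, hm⟩

namespace IsBestResponse

variable {a b : Set ℕ+ → ℝ}

theorem integral_pos_of_atom (hab : IsBestResponse a b) (hb : IsCharge b) {x : ℕ+}
    (hx : 0 < b {x}) : 0 < chargeIntegral a (payoffAgainst b) := by
  have hxs : {x} ⊆ Iio (x + 1) := singleton_subset_iff.mpr (PNat.lt_add_one_iff.mpr le_rfl)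
  have : 0 < payoffAgainst b (x + 1) :=
    mul_pos (by positivity) (hx.trans_le (hb.mono hxs))
  exact this.trans_le (hab _)

theorem exists_atom_lt (hab : IsBestResponse a b) (ha : IsCharge a) (hb : IsCharge b)
    (hv : 0 < chargeIntegral a (payoffAgainst b)) {m : ℕ+} (hm : 0 < a {m}) :
    ∃ k < m, 0 < b {k} := by
  have hle : chargeIntegral a (payoffAgainst b) ≤ payoffAgainst b m :=
    le_of_atom ha (payoffAgainst_nonneg hb) hab le_rfl hm
  have hpos : 0 < b (Iio m) := pos_of_mul_pos_right (hv.trans_le hle) (by positivity)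
  exact hb.exists_atom_of_finite (finite_Iio m) hpos

theorem diffuse (hab : IsBestResponse a b) (hba : IsBestResponse b a) (ha : IsCharge a)
    (hb : IsCharge b) : Diffuse b := by
  by_contra hnd
  obtain ⟨x, hx⟩ : ∃ x, 0 < b {x} := by
    obtain ⟨x, hx⟩ := not_forall.mp hnd
    exact ⟨x, (hb.nonneg _).lt_of_ne' hx⟩
  have hv := hab.integral_pos_of_atom hb hx
  obtain ⟨y, hy⟩ := exists_atom_of_integral_payoffAgainst_pos ha hb hv
  have hw := hba.integral_pos_of_atom ha hy
  obtain ⟨m, hm, hmin⟩ :=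
    wellFounded_lt.has_min {k : ℕ+ | 0 < a {k} ∨ 0 < b {k}} ⟨x, Or.inr hx⟩
  rcases hm with hm | hm
  · obtain ⟨k, hk, hbk⟩ := hab.exists_atom_lt ha hb hv hm
    exact hmin k (Or.inr hbk) hk
  · obtain ⟨k, hk, hak⟩ := hba.exists_atom_lt hb ha hw hm
    exact hmin k (Or.inl hak) hk

end IsBestResponse

theorem nashEq_iff_diffuse {κ₁ κ₂ : Set ℕ+ → ℝ} (h₁ : IsCharge κ₁) (h₂ : IsCharge κ₂) :
    NashEq κ₁ κ₂ ↔ Diffuse κ₁ ∧ Diffuse κ₂ := by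
  constructor
  · intro hN
    have h₁₂ := hN.isBestResponse_left h₂
    have h₂₁ := hN.isBestResponse_right h₁
    exact ⟨h₂₁.diffuse h₁₂ h₂ h₁, h₁₂.diffuse h₂₁ h₁ h₂⟩
  · rintro ⟨hd₁, hd₂⟩
    refine ⟨fun τ hτ => ?_, fun τ hτ => ?_⟩
    · rw [U1_eq_zero hτ h₂ hd₂, U1_eq_zero h₁ h₂ hd₂]
    · rw [U2_eq_zero h₁ hτ hd₁, U2_eq_zero h₁ h₂ hd₁]

theorem not_diffuse_of_countablyAdditive {κ : Set ℕ+ → ℝ} (hκ : IsCharge κ)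
    (hca : CountablyAdditive κ) : ¬ Diffuse κ := fun hd => by
  have := hca univ
  simp [hκ.total, hd _] at this

/-- In the symmetric game on `ℕ × ℕ` with payoff `u₁(m,n) = 1/m` if `n < m` and `0`
otherwise, played with charges: `(κ₁, κ₂)` is a Nash equilibrium iff both `κ₁` and `κ₂` are
diffuse; every Nash equilibrium yields payoff `0` to both players; and there is no Nash
equilibrium in countably additive strategies. -/
theorem wald_variant_equilibria :
    (∀ κ₁ κ₂ : Set ℕ+ → ℝ, IsCharge κ₁ → IsCharge κ₂ →
      (NashEq κ₁ κ₂ ↔ (Diffuse κ₁ ∧ Diffuse κ₂))) ∧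
    (∀ κ₁ κ₂ : Set ℕ+ → ℝ, IsCharge κ₁ → IsCharge κ₂ → NashEq κ₁ κ₂ →
      U1 κ₁ κ₂ = 0 ∧ U2 κ₁ κ₂ = 0) ∧
    (¬ ∃ κ₁ κ₂ : Set ℕ+ → ℝ, IsCharge κ₁ ∧ IsCharge κ₂ ∧
      CountablyAdditive κ₁ ∧ CountablyAdditive κ₂ ∧ NashEq κ₁ κ₂) := by
  refine ⟨fun κ₁ κ₂ h₁ h₂ => nashEq_iff_diffuse h₁ h₂, fun κ₁ κ₂ h₁ h₂ hN => ?_, ?_⟩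
  · obtain ⟨hd₁, hd₂⟩ := (nashEq_iff_diffuse h₁ h₂).mp hN
    exact ⟨U1_eq_zero h₁ h₂ hd₂, U2_eq_zero h₁ h₂ hd₁⟩
  · rintro ⟨κ₁, κ₂, h₁, h₂, hca₁, -, hN⟩
    exact not_diffuse_of_countablyAdditive h₁ hca₁ ((nashEq_iff_diffuse h₁ h₂).mp hN).1
end

section
/- Let A be a set, F a field on A, and u : A → ℝ a bounded function that is a uniform limit of F-simple functions. Then for every charge κ on (A,F), the lower integral sup{κ(f) : f simple, f ≤ u} equals the upper integral inf{κ(g) : g simple, g ≥ u}; i.e., u is integrable with respect to every charge. Moreover, the map κ ↦ ∫ u dκ is continuous with respect to the topology of setwise (pointwise on F) convergence of charges. -/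
/-! If `f` is simple with `|u - f| ≤ ε`, then `f - ε ≤ u ≤ f + ε` are simple, so the lower and
upper integrals of `u` both lie within `ε` of `∫ f dκ`; hence they coincide. The same estimate is
uniform in `κ`, and `κ ↦ ∫ f dκ` is a finite linear combination of evaluations `κ ↦ κ(E)`, so the
integral of `u` is a uniform limit of continuous functions of `κ`. -/

/-- A field of subsets of `A`. -/
structure IsSetField {A : Type*} (F : Set (Set A)) : Prop where
  empty_mem : ∅ ∈ F
  compl_mem : ∀ E ∈ F, Eᶜ ∈ F
  union_mem : ∀ E ∈ F, ∀ G ∈ F, E ∪ G ∈ F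

/-- A finitely additive probability measure (charge) on the field `F`. -/
structure IsChargeOn {A : Type*} (F : Set (Set A)) (σ : Set A → ℝ) : Prop where
  nonneg : ∀ E ∈ F, 0 ≤ σ E
  empty : σ ∅ = 0
  total : σ Set.univ = 1
  additive : ∀ E ∈ F, ∀ G ∈ F, Disjoint E G → σ (E ∪ G) = σ E + σ G

/-- The set of integrals `κ(f)` of `F`-simple functions `f ≤ u` (lower sums). -/
def lowerInts {A : Type*} (F : Set (Set A)) (u : A → ℝ) (κ : Set A → ℝ) : Set ℝ :=
  {r | ∃ f : A → ℝ, ∃ hf : (Set.range f).Finite, (∀ c : ℝ, f ⁻¹' {c} ∈ F) ∧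
    (∀ a, f a ≤ u a) ∧ r = ∑ c ∈ hf.toFinset, c * κ (f ⁻¹' {c})}

/-- The set of integrals `κ(g)` of `F`-simple functions `g ≥ u` (upper sums). -/
def upperInts {A : Type*} (F : Set (Set A)) (u : A → ℝ) (κ : Set A → ℝ) : Set ℝ :=
  {r | ∃ g : A → ℝ, ∃ hg : (Set.range g).Finite, (∀ c : ℝ, g ⁻¹' {c} ∈ F) ∧
    (∀ a, u a ≤ g a) ∧ r = ∑ c ∈ hg.toFinset, c * κ (g ⁻¹' {c})}

namespace IsSetField

variable {A : Type*} {F : Set (Set A)}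

theorem isSetRing (hF : IsSetField F) : MeasureTheory.IsSetRing F where
  empty_mem := hF.empty_mem
  union_mem := fun _ _ hs ht => hF.union_mem _ hs _ ht
  sdiff_mem := fun s t hs ht => by
    simpa [Set.sdiff_eq, Set.compl_union] using
      hF.compl_mem _ (hF.union_mem _ (hF.compl_mem s hs) _ ht)

theorem univ_mem (hF : IsSetField F) : Set.univ ∈ F := by
  simpa using hF.compl_mem ∅ hF.empty_mem

end IsSetField

namespace IsChargeOn

variable {A ι : Type*} {F : Set (Set A)} {κ : Set A → ℝ}

theorem biUnion_eq_sum (hF : IsSetField F) (hκ : IsChargeOn F κ) (s : Finset ι)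
    {T : ι → Set A} (hT : ∀ i ∈ s, T i ∈ F) (hd : (s : Set ι).PairwiseDisjoint T) :
    κ (⋃ i ∈ s, T i) = ∑ i ∈ s, κ (T i) := by
  classical
  induction s using Finset.induction with
  | empty => simpa using hκ.empty
  | insert a s ha ih =>
    rw [Finset.coe_insert, Set.pairwiseDisjoint_insert] at hd
    have hTs : ∀ i ∈ s, T i ∈ F := fun i hi => hT i (Finset.mem_insert_of_mem hi)
    have hdisj : Disjoint (T a) (⋃ i ∈ s, T i) :=
      Set.disjoint_iUnion₂_right.2 fun i hi => hd.2 i hi fun h => ha (h ▸ hi)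
    rw [Finset.set_biUnion_insert, Finset.sum_insert ha,
      hκ.additive _ (hT a (Finset.mem_insert_self a s)) _
        (hF.isSetRing.biUnion_mem s hTs) hdisj, ih hTs hd.1]

theorem eq_sum_inter_preimage (hF : IsSetField F) (hκ : IsChargeOn F κ) {g : A → ℝ}
    (hg : (Set.range g).Finite) (hgF : ∀ c, g ⁻¹' {c} ∈ F) {E : Set A} (hE : E ∈ F) :
    κ E = ∑ d ∈ hg.toFinset, κ (E ∩ g ⁻¹' {d}) := by
  have hcover : ⋃ d ∈ hg.toFinset, E ∩ g ⁻¹' {d} = E := by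
    simp only [Set.Finite.mem_toFinset, ← Set.inter_iUnion₂, Set.biUnion_preimage_singleton,
      Set.preimage_range, Set.inter_univ]
  rw [← biUnion_eq_sum hF hκ _ (fun d _ => hF.isSetRing.inter_mem hE (hgF d)), hcover]
  intro c _ d _ hcd
  exact ((Set.disjoint_singleton.2 hcd).preimage g).mono Set.inter_subset_right
    Set.inter_subset_right

theorem sum_preimage_eq_one (hF : IsSetField F) (hκ : IsChargeOn F κ) {f : A → ℝ}
    (hf : (Set.range f).Finite) (hfF : ∀ c, f ⁻¹' {c} ∈ F) :
    ∑ c ∈ hf.toFinset, κ (f ⁻¹' {c}) = 1 := by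
  simpa [hκ.total] using (eq_sum_inter_preimage hF hκ hf hfF hF.univ_mem).symm

end IsChargeOn

noncomputable def simpleIntegral {A : Type*} (κ : Set A → ℝ) (f : A → ℝ) (hf : (Set.range f).Finite) : ℝ :=
  ∑ c ∈ hf.toFinset, c * κ (f ⁻¹' {c})

section SimpleIntegral

variable {A : Type*} {F : Set (Set A)} {κ : Set A → ℝ}

theorem simpleIntegral_mono (hF : IsSetField F) (hκ : IsChargeOn F κ) {f g : A → ℝ}
    (hf : (Set.range f).Finite) (hg : (Set.range g).Finite)
    (hfF : ∀ c, f ⁻¹' {c} ∈ F) (hgF : ∀ c, g ⁻¹' {c} ∈ F) (hle : ∀ a, f a ≤ g a) :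
    simpleIntegral κ f hf ≤ simpleIntegral κ g hg := by
  have hmem : ∀ c d, f ⁻¹' {c} ∩ g ⁻¹' {d} ∈ F := fun c d =>
    hF.isSetRing.inter_mem (hfF c) (hgF d)
  calc simpleIntegral κ f hf
      = ∑ c ∈ hf.toFinset, ∑ d ∈ hg.toFinset, c * κ (f ⁻¹' {c} ∩ g ⁻¹' {d}) := by
        refine Finset.sum_congr rfl fun c _ => ?_
        rw [hκ.eq_sum_inter_preimage hF hg hgF (hfF c), Finset.mul_sum]
    _ ≤ ∑ c ∈ hf.toFinset, ∑ d ∈ hg.toFinset, d * κ (f ⁻¹' {c} ∩ g ⁻¹' {d}) := by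
        refine Finset.sum_le_sum fun c _ => Finset.sum_le_sum fun d _ => ?_
        rcases (f ⁻¹' {c} ∩ g ⁻¹' {d}).eq_empty_or_nonempty with h | ⟨a, rfl, rfl⟩
        · simp [h, hκ.empty]
        · exact mul_le_mul_of_nonneg_right (hle a) (hκ.nonneg _ (hmem _ _))
    _ = simpleIntegral κ g hg := by
        rw [Finset.sum_comm]
        refine Finset.sum_congr rfl fun d _ => ?_
        simp only [← Finset.mul_sum, Set.inter_comm (f ⁻¹' _),
          ← hκ.eq_sum_inter_preimage hF hf hfF (hgF d)]

theorem simpleIntegral_add_const (hF : IsSetField F) (hκ : IsChargeOn F κ) {f : A → ℝ}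
    (hf : (Set.range f).Finite) (hfF : ∀ c, f ⁻¹' {c} ∈ F) (t : ℝ)
    (hft : (Set.range fun a => f a + t).Finite) :
    simpleIntegral κ (fun a => f a + t) hft = simpleIntegral κ f hf + t := by
  classical
  have hrange : hft.toFinset = hf.toFinset.image (· + t) := by
    ext c
    simp [eq_sub_iff_add_eq, ← sub_eq_add_neg]
  have hpre : ∀ c, (fun a => f a + t) ⁻¹' {c + t} = f ⁻¹' {c} := fun c => by
    ext a; simp
  rw [simpleIntegral, hrange, Finset.sum_image fun x _ y _ h => add_right_cancel h]
  simp only [hpre, add_mul, Finset.sum_add_distrib, ← Finset.mul_sum,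
    hκ.sum_preimage_eq_one hF hf hfF, mul_one, simpleIntegral]

end SimpleIntegral

theorem continuous_of_forall_dist_le_of_continuous {X Y : Type*} [TopologicalSpace X]
    [PseudoMetricSpace Y] {f : X → Y}
    (h : ∀ ε > 0, ∃ g : X → Y, Continuous g ∧ ∀ x, dist (f x) (g x) ≤ ε) : Continuous f := by
  refine continuous_of_uniform_approx_of_continuous fun U hU => ?_
  obtain ⟨ε, hε, hεU⟩ := Metric.mem_uniformity_dist.1 hU
  obtain ⟨g, hg, hfg⟩ := h (ε / 2) (half_pos hε)
  exact ⟨g, hg, fun x => hεU ((hfg x).trans_lt (half_lt_self hε))⟩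

section SimpleApproximation

variable {A : Type*} {F : Set (Set A)} {κ : Set A → ℝ} {u f : A → ℝ}

theorem finite_range_add_const (hf : (Set.range f).Finite) (t : ℝ) :
    (Set.range fun a => f a + t).Finite :=
  Set.range_comp (· + t) f ▸ hf.image _

theorem preimage_add_const_singleton_mem (hfF : ∀ c, f ⁻¹' {c} ∈ F) (t c : ℝ) :
    (fun a => f a + t) ⁻¹' {c} ∈ F := by
  have hpre : (fun a => f a + t) ⁻¹' {c} = f ⁻¹' {c - t} := by
    ext a
    simp [eq_sub_iff_add_eq]
  exact hpre ▸ hfF (c - t)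

theorem le_of_mem_lowerInts_of_mem_upperInts (hF : IsSetField F) (hκ : IsChargeOn F κ)
    {r s : ℝ} (hr : r ∈ lowerInts F u κ) (hs : s ∈ upperInts F u κ) : r ≤ s := by
  obtain ⟨f, hf, hfF, hfu, rfl⟩ := hr
  obtain ⟨g, hg, hgF, hug, rfl⟩ := hs
  exact simpleIntegral_mono hF hκ hf hg hfF hgF fun a => (hfu a).trans (hug a)

theorem simpleIntegral_sub_mem_lowerInts (hF : IsSetField F) (hκ : IsChargeOn F κ)
    (hf : (Set.range f).Finite) (hfF : ∀ c, f ⁻¹' {c} ∈ F) {ε : ℝ}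
    (happ : ∀ a, |u a - f a| ≤ ε) : simpleIntegral κ f hf - ε ∈ lowerInts F u κ := by
  refine ⟨fun a => f a + -ε, finite_range_add_const hf _, preimage_add_const_singleton_mem hfF _,
    fun a => ?_, ?_⟩
  · show f a + -ε ≤ u a
    linarith [(abs_le.1 (happ a)).1]
  · rw [← simpleIntegral, simpleIntegral_add_const hF hκ hf hfF, sub_eq_add_neg]

theorem simpleIntegral_add_mem_upperInts (hF : IsSetField F) (hκ : IsChargeOn F κ)
    (hf : (Set.range f).Finite) (hfF : ∀ c, f ⁻¹' {c} ∈ F) {ε : ℝ}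
    (happ : ∀ a, |u a - f a| ≤ ε) : simpleIntegral κ f hf + ε ∈ upperInts F u κ := by
  refine ⟨fun a => f a + ε, finite_range_add_const hf _, preimage_add_const_singleton_mem hfF _,
    fun a => ?_, ?_⟩
  · show u a ≤ f a + ε
    linarith [(abs_le.1 (happ a)).2]
  · rw [← simpleIntegral, simpleIntegral_add_const hF hκ hf hfF]

theorem abs_sSup_lowerInts_sub_simpleIntegral_le (hF : IsSetField F) (hκ : IsChargeOn F κ)
    (hf : (Set.range f).Finite) (hfF : ∀ c, f ⁻¹' {c} ∈ F) {ε : ℝ}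
    (happ : ∀ a, |u a - f a| ≤ ε) :
    |sSup (lowerInts F u κ) - simpleIntegral κ f hf| ≤ ε := by
  have hlower := simpleIntegral_sub_mem_lowerInts hF hκ hf hfF happ
  have hupper := simpleIntegral_add_mem_upperInts hF hκ hf hfF happ
  have hle : ∀ r ∈ lowerInts F u κ, r ≤ simpleIntegral κ f hf + ε := fun r hr =>
    le_of_mem_lowerInts_of_mem_upperInts hF hκ hr hupper
  rw [abs_sub_le_iff, sub_le_iff_le_add', sub_le_comm]
  exact ⟨csSup_le ⟨_, hlower⟩ hle, le_csSup ⟨_, hle⟩ hlower⟩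

theorem abs_sInf_upperInts_sub_simpleIntegral_le (hF : IsSetField F) (hκ : IsChargeOn F κ)
    (hf : (Set.range f).Finite) (hfF : ∀ c, f ⁻¹' {c} ∈ F) {ε : ℝ}
    (happ : ∀ a, |u a - f a| ≤ ε) :
    |sInf (upperInts F u κ) - simpleIntegral κ f hf| ≤ ε := by
  have hlower := simpleIntegral_sub_mem_lowerInts hF hκ hf hfF happ
  have hupper := simpleIntegral_add_mem_upperInts hF hκ hf hfF happ
  have hge : ∀ s ∈ upperInts F u κ, simpleIntegral κ f hf - ε ≤ s := fun s hs =>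
    le_of_mem_lowerInts_of_mem_upperInts hF hκ hlower hs
  rw [abs_sub_le_iff, sub_le_iff_le_add', sub_le_comm]
  exact ⟨csInf_le ⟨_, hge⟩ hupper, le_csInf ⟨_, hupper⟩ hge⟩

theorem continuous_simpleIntegral {X : Type*} [TopologicalSpace X] {κ : X → Set A → ℝ}
    (hκ : ∀ E ∈ F, Continuous fun x => κ x E) (hf : (Set.range f).Finite)
    (hfF : ∀ c, f ⁻¹' {c} ∈ F) : Continuous fun x => simpleIntegral (κ x) f hf :=
  continuous_finsetSum _ fun c _ => continuous_const.mul (hκ _ (hfF c))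

end SimpleApproximation

theorem uniform_limit_integrable_and_integral_continuous_general
    {A : Type*} (F : Set (Set A)) (hF : IsSetField F) (u : A → ℝ)
    (hu : ∀ ε : ℝ, 0 < ε → ∃ f : A → ℝ, (Set.range f).Finite ∧
      (∀ c : ℝ, f ⁻¹' {c} ∈ F) ∧ ∀ a, |u a - f a| < ε) :
    (∀ κ : Set A → ℝ, IsChargeOn F κ →
      sSup (lowerInts F u κ) = sInf (upperInts F u κ)) ∧
    @Continuous {κ : Set A → ℝ // IsChargeOn F κ} ℝ
      (TopologicalSpace.induced
        (fun κ : {κ : Set A → ℝ // IsChargeOn F κ} => (fun E : F => κ.1 E.1))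
        Pi.topologicalSpace)
      inferInstance
      (fun κ => sSup (lowerInts F u κ.1)) := by
  constructor
  · intro κ hκ
    refine eq_of_forall_dist_le fun ε hε => ?_
    obtain ⟨f, hf, hfF, happ⟩ := hu (ε / 2) (half_pos hε)
    have happ' : ∀ a, |u a - f a| ≤ ε / 2 := fun a => (happ a).le
    calc dist (sSup (lowerInts F u κ)) (sInf (upperInts F u κ))
        ≤ |sSup (lowerInts F u κ) - simpleIntegral κ f hf|
          + |sInf (upperInts F u κ) - simpleIntegral κ f hf| := by
          rw [Real.dist_eq, abs_sub_comm (sInf _)]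
          exact abs_sub_le _ _ _
      _ ≤ ε / 2 + ε / 2 := add_le_add
          (abs_sSup_lowerInts_sub_simpleIntegral_le hF hκ hf hfF happ')
          (abs_sInf_upperInts_sub_simpleIntegral_le hF hκ hf hfF happ')
      _ = ε := add_halves ε
  · let _ : TopologicalSpace {κ : Set A → ℝ // IsChargeOn F κ} :=
      TopologicalSpace.induced (fun κ => fun E : F => κ.1 E.1) Pi.topologicalSpace
    have hEval : ∀ E ∈ F, Continuous fun κ : {κ : Set A → ℝ // IsChargeOn F κ} => κ.1 E :=
      fun E hE => (continuous_apply (⟨E, hE⟩ : F)).comp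
        (continuous_induced_dom : Continuous fun κ : {κ // IsChargeOn F κ} => fun E : F => κ.1 E)
    refine continuous_of_forall_dist_le_of_continuous fun ε hε => ?_
    obtain ⟨f, hf, hfF, happ⟩ := hu ε hε
    exact ⟨_, continuous_simpleIntegral hEval hf hfF, fun κ =>
      abs_sSup_lowerInts_sub_simpleIntegral_le hF κ.2 hf hfF fun a => (happ a).le⟩

/-- Let `u : A → ℝ` be bounded and a uniform limit of `F`-simple functions. Then, for every
charge `κ` on `(A, F)`, the lower integral equals the upper integral (`u` is integrable with
respect to every charge), and the map `κ ↦ ∫ u dκ` is continuous in the topology of setwise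
(pointwise on `F`) convergence of charges. -/
theorem uniform_limit_integrable_and_integral_continuous
    {A : Type*} (F : Set (Set A)) (hF : IsSetField F) (u : A → ℝ)
    (M : ℝ) (hb : ∀ a, |u a| ≤ M)
    (hu : ∀ ε : ℝ, 0 < ε → ∃ f : A → ℝ, (Set.range f).Finite ∧
      (∀ c : ℝ, f ⁻¹' {c} ∈ F) ∧ ∀ a, |u a - f a| < ε) :
    (∀ κ : Set A → ℝ, IsChargeOn F κ →
      sSup (lowerInts F u κ) = sInf (upperInts F u κ)) ∧
    @Continuous {κ : Set A → ℝ // IsChargeOn F κ} ℝ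
      (TopologicalSpace.induced
        (fun κ : {κ : Set A → ℝ // IsChargeOn F κ} => (fun E : F => κ.1 E.1))
        Pi.topologicalSpace)
      inferInstance
      (fun κ => sSup (lowerInts F u κ.1)) :=
  uniform_limit_integrable_and_integral_continuous_general F hF u hu
end
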